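/- arXiv:1205.5898 — 10 statements merged into one kernel-verified Lean document; each statement's English description precedes it below -/
import Mathlib

section
/- The Jacobiator J(e₁,e₂,e₃) = e₁∘(e₂∘e₃) − (e₁∘e₂)∘e₃ − e₂∘(e₁∘e₃) of a pre-Courant algebroid is skew-symmetric in its three arguments. -/
/-- Algebraic model of a pre-Courant algebroid: `R` plays the role of the ring of
smooth functions `C^∞(M)`, `E` the space of sections `Γ(E)`, vector fields are
modelled by derivations of `R`. -/
structure PreCourantAlgebroid (R : Type*) [CommRing R] [Algebra ℚ R]
    (E : Type*) [AddCommGroup E] [Module R E] where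
  /-- the fibrewise pseudo-metric `⟨·,·⟩` -/
  pair : E →ₗ[R] E →ₗ[R] R
  pair_symm : ∀ e₁ e₂ : E, pair e₁ e₂ = pair e₂ e₁
  pair_nondeg : ∀ e : E, (∀ e' : E, pair e e' = 0) → e = 0
  /-- the anchor `ρ : E → TM` -/
  anchor : E →ₗ[R] Derivation ℚ R R
  /-- `ρ ∘ ρ* = 0`, i.e. `Ker ρ` is coisotropic: `(Ker ρ)^⊥ ⊆ Ker ρ` -/
  coiso : ∀ e : E, (∀ κ : E, anchor κ = 0 → pair e κ = 0) → anchor e = 0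
  /-- the operator `D : C^∞(M) → Γ(E)` -/
  D : R → E
  pair_D : ∀ (f : R) (e : E), pair (D f) e = anchor e f
  /-- the Dorfman-type operation `∘` -/
  op : E → E → E
  op_add_left : ∀ e₁ e₂ e₃ : E, op (e₁ + e₂) e₃ = op e₁ e₃ + op e₂ e₃
  op_add_right : ∀ e₁ e₂ e₃ : E, op e₁ (e₂ + e₃) = op e₁ e₂ + op e₁ e₃
  /-- Axiom (i) -/
  anchor_op : ∀ e₁ e₂ : E, anchor (op e₁ e₂) = ⁅anchor e₁, anchor e₂⁆
  /-- Axiom (ii) -/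
  ax2 : ∀ e₁ e₂ : E, pair (op e₁ e₁) e₂ = (2⁻¹ : ℚ) • (anchor e₂ (pair e₁ e₁))
  /-- Axiom (iii) -/
  ax3 : ∀ e₁ e₂ e₃ : E,
    anchor e₁ (pair e₂ e₃) = pair (op e₁ e₂) e₃ + pair e₂ (op e₁ e₃)

/-- The Jacobiator of a pre-Courant algebroid. -/
def PreCourantAlgebroid.Jac {R : Type*} [CommRing R] [Algebra ℚ R]
    {E : Type*} [AddCommGroup E] [Module R E]
    (P : PreCourantAlgebroid R E) (e₁ e₂ e₃ : E) : E :=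
  P.op e₁ (P.op e₂ e₃) - P.op (P.op e₁ e₂) e₃ - P.op e₂ (P.op e₁ e₃)


variable {R : Type*} [CommRing R] [Algebra ℚ R]
variable {E : Type*} [AddCommGroup E] [Module R E]

namespace PreCourantAlgebroid

lemma nondeg (P : PreCourantAlgebroid R E) {x y : E}
    (h : ∀ c : E, P.pair x c = P.pair y c) : x = y := by
  have := P.pair_nondeg (x - y) (fun c => by simp [map_sub, LinearMap.sub_apply, h c])
  exact sub_eq_zero.mp this

lemma pol (P : PreCourantAlgebroid R E) (a b : E) :
    P.op a b + P.op b a = P.D (P.pair a b) := by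
  apply P.nondeg
  intro c
  have h := P.ax2 (a + b) c
  rw [P.op_add_left, P.op_add_right, P.op_add_right] at h
  simp only [map_add, LinearMap.add_apply, P.ax2 a c, P.ax2 b c,
    P.pair_symm b a, P.pair_D, smul_add] at h ⊢
  have half : ∀ r : R, (2⁻¹ : ℚ) • r + (2⁻¹ : ℚ) • r = r := by
    intro r
    rw [← add_smul]
    norm_num
  linear_combination (norm := module) h

lemma anchor_D (P : PreCourantAlgebroid R E) (f : R) : P.anchor (P.D f) = 0 :=
  P.coiso _ (fun κ hκ => by rw [P.pair_D, hκ]; simp)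

lemma op_D (P : PreCourantAlgebroid R E) (e : E) (f : R) :
    P.op e (P.D f) = P.D (P.anchor e f) := by
  apply P.nondeg
  intro c
  have h := P.ax3 e (P.D f) c
  rw [P.pair_D, P.pair_D, P.anchor_op, Derivation.commutator_apply] at h
  rw [P.pair_D]
  linear_combination -h

lemma D_op (P : PreCourantAlgebroid R E) (f : R) (e : E) :
    P.op (P.D f) e = 0 := by
  have h := P.pol (P.D f) e
  rw [P.pair_D, ← P.op_D e f] at h
  exact add_right_cancel (h.trans (zero_add _).symm)

lemma D_add (P : PreCourantAlgebroid R E) (f g : R) :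
    P.D (f + g) = P.D f + P.D g := by
  apply P.nondeg
  intro c
  simp [P.pair_D, map_add, LinearMap.add_apply]

end PreCourantAlgebroid

/-- Lemma 3.5: the Jacobiator of a pre-Courant algebroid is skew-symmetric. -/
theorem preCourant_Jac_skew (P : PreCourantAlgebroid R E) (e₁ e₂ e₃ : E) :
    P.Jac e₁ e₂ e₃ = - P.Jac e₂ e₁ e₃ ∧ P.Jac e₁ e₂ e₃ = - P.Jac e₁ e₃ e₂ := by
  constructor
  · apply eq_neg_of_add_eq_zero_left
    have key : P.Jac e₁ e₂ e₃ + P.Jac e₂ e₁ e₃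
        = - P.op (P.op e₁ e₂ + P.op e₂ e₁) e₃ := by
      simp only [PreCourantAlgebroid.Jac, P.op_add_left]; abel
    rw [key, P.pol, P.D_op, neg_zero]
  · apply eq_neg_of_add_eq_zero_left
    have key : P.Jac e₁ e₂ e₃ + P.Jac e₁ e₃ e₂
        = P.op e₁ (P.op e₂ e₃ + P.op e₃ e₂)
          - (P.op (P.op e₁ e₂) e₃ + P.op e₃ (P.op e₁ e₂))
          - (P.op e₂ (P.op e₁ e₃) + P.op (P.op e₁ e₃) e₂) := by
      simp only [PreCourantAlgebroid.Jac, P.op_add_right]; abel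
    rw [key, P.pol e₂ e₃, P.pol (P.op e₁ e₂) e₃, P.pol e₂ (P.op e₁ e₃),
      P.op_D, P.ax3 e₁ e₂ e₃, P.D_add]
    abel
end

section
/- The Jacobiator J of a pre-Courant algebroid is C^∞(M)-linear in each argument, i.e. J(e₁,e₂,f e₃) = f J(e₁,e₂,e₃) for all f ∈ C^∞(M), and similarly in the other arguments by skew-symmetry. -/
variable {R : Type*} [CommRing R] [Algebra ℚ R]
variable {E : Type*} [AddCommGroup E] [Module R E]

/-- Auxiliary: equality of sections from equal pairings. -/
lemma preCourant_ext (P : PreCourantAlgebroid R E) (x y : E)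
    (h : ∀ z : E, P.pair x z = P.pair y z) : x = y := by
  have := P.pair_nondeg (x - y) (fun z => by simp [h z])
  have := sub_eq_zero.mp this
  exact this

/-- Right Leibniz rule for the Dorfman operation. -/
lemma preCourant_op_smul_right (P : PreCourantAlgebroid R E) (e x : E) (f : R) :
    P.op e (f • x) = f • P.op e x + (P.anchor e f) • x := by
  apply preCourant_ext P
  intro z
  have h1 := P.ax3 e (f • x) z
  have h2 := P.ax3 e x z
  have hpair : P.pair (f • x) z = f * P.pair x z := by simp
  have hop : P.pair (f • x) (P.op e z) = f * P.pair x (P.op e z) := by simp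
  have hleib : P.anchor e (f * P.pair x z)
      = f * P.anchor e (P.pair x z) + P.pair x z * P.anchor e f := by
    simpa [smul_eq_mul] using (P.anchor e).leibniz f (P.pair x z)
  have : P.pair (P.op e (f • x)) z
      = f * P.pair (P.op e x) z + P.anchor e f * P.pair x z := by
    have := h1
    rw [hpair, hleib, hop] at this
    have h2' : P.anchor e (P.pair x z) = P.pair (P.op e x) z + P.pair x (P.op e z) := h2
    linear_combination f * h2' - this
  simpa [mul_comm] using this

/-- Lemma 3.6: the Jacobiator is `C^∞(M)`-linear:
`J(e₁,e₂,f e₃) = f J(e₁,e₂,e₃)` (and similarly in the other arguments by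
skew-symmetry). -/
theorem preCourant_Jac_smul (P : PreCourantAlgebroid R E)
    (e₁ e₂ e₃ : E) (f : R) :
    P.Jac e₁ e₂ (f • e₃) = f • P.Jac e₁ e₂ e₃ := by
  have hbr : P.anchor (P.op e₁ e₂) f
      = P.anchor e₁ (P.anchor e₂ f) - P.anchor e₂ (P.anchor e₁ f) := by
    rw [P.anchor_op]
    rfl
  simp only [PreCourantAlgebroid.Jac, preCourant_op_smul_right, P.op_add_right,
    map_add, hbr, smul_smul, smul_add, add_smul, sub_smul, smul_sub]
  module
end

section
/- For a pre-Courant algebroid, J(Df, e₁, e₂) = 0 for all f ∈ C^∞(M) and sections e₁, e₂. -/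
variable {R : Type*} [CommRing R] [Algebra ℚ R]
variable {E : Type*} [AddCommGroup E] [Module R E]


section Aux
variable {R : Type*} [CommRing R] [Algebra ℚ R]
variable {E : Type*} [AddCommGroup E] [Module R E]

lemma pca_op_symm (P : PreCourantAlgebroid R E) (e e' : E) :
    P.op e e' + P.op e' e = P.D (P.pair e e') := by
  have key : ∀ κ : E, P.pair (P.op e e' + P.op e' e - P.D (P.pair e e')) κ = 0 := by
    intro κ
    have h := P.ax2 (e + e') κ
    rw [P.op_add_left, P.op_add_right, P.op_add_right] at h
    simp only [map_add, LinearMap.add_apply, map_sub, LinearMap.sub_apply] at h ⊢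
    rw [P.ax2 e κ, P.ax2 e' κ, P.pair_symm e' e] at h
    rw [P.pair_D]
    rw [Algebra.smul_def, Algebra.smul_def, Algebra.smul_def] at h
    have hc : (algebraMap ℚ R) 2⁻¹ * 2 = 1 := by
      rw [← map_ofNat (algebraMap ℚ R) 2, ← map_mul]
      norm_num
    linear_combination h + ((P.anchor κ) (P.pair e e')) * hc
  have := P.pair_nondeg _ key
  have h := sub_eq_zero.mp this
  exact h

lemma pca_op_D_right (P : PreCourantAlgebroid R E) (f : R) (e : E) :
    P.op e (P.D f) = P.D (P.anchor e f) := by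
  have key : ∀ κ : E, P.pair (P.op e (P.D f) - P.D (P.anchor e f)) κ = 0 := by
    intro κ
    have h := P.ax3 e (P.D f) κ
    rw [P.pair_D f κ, P.pair_D f (P.op e κ)] at h
    have hb : (P.anchor (P.op e κ)) f
        = (P.anchor e) ((P.anchor κ) f) - (P.anchor κ) ((P.anchor e) f) := by
      rw [P.anchor_op]
      exact Derivation.commutator_apply _
    rw [map_sub, LinearMap.sub_apply, P.pair_D]
    linear_combination -h - hb
  have := P.pair_nondeg _ key
  exact sub_eq_zero.mp this

lemma pca_op_D_left (P : PreCourantAlgebroid R E) (f : R) (e : E) :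
    P.op (P.D f) e = 0 := by
  have h := pca_op_symm P (P.D f) e
  rw [pca_op_D_right, P.pair_D] at h
  exact add_eq_right.mp h

lemma pca_op_zero_left (P : PreCourantAlgebroid R E) (e : E) :
    P.op 0 e = 0 := by
  have h := P.op_add_left 0 0 e
  rw [add_zero] at h
  exact (left_eq_add.mp h)

lemma pca_op_zero_right (P : PreCourantAlgebroid R E) (e : E) :
    P.op e 0 = 0 := by
  have h := P.op_add_right e 0 0
  rw [add_zero] at h
  exact (left_eq_add.mp h)

end Aux

/-- Lemma 3.7: `J(D f, ·, ·) = 0`. -/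
theorem preCourant_Jac_D (P : PreCourantAlgebroid R E) (f : R) (e₁ e₂ : E) :
    P.Jac (P.D f) e₁ e₂ = 0 := by
  unfold PreCourantAlgebroid.Jac
  rw [pca_op_D_left, pca_op_D_left, pca_op_D_left, pca_op_zero_left,
    pca_op_zero_right]
  abel
end

section
/- For a pre-Courant algebroid, the map (e₁,e₂,e₃,e₄) ↦ ⟨J(e₁,e₂,e₃), e₄⟩ is totally skew-symmetric; in particular ⟨J(e₁,e₂,e₃),e₄⟩ + ⟨J(e₄,e₂,e₃),e₁⟩ = 0. -/
variable {R : Type*} [CommRing R] [Algebra ℚ R]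
variable {E : Type*} [AddCommGroup E] [Module R E]

private lemma pc_half_cancel (r : R) (h : r + r = 0) : r = 0 := by
  have : ((2⁻¹ : ℚ)) • ((2 : ℚ) • r) = r := by rw [smul_smul]; norm_num
  rw [two_smul] at this
  rw [← this, h, smul_zero]

private lemma pc_polar (P : PreCourantAlgebroid R E) (x y z : E) :
    P.pair (P.op x y) z + P.pair (P.op y x) z = P.anchor z (P.pair x y) := by
  have hc : (algebraMap ℚ R) 2⁻¹ * 2 = 1 := by
    rw [← map_ofNat (algebraMap ℚ R) 2, ← map_mul]
    norm_num
  have h := P.ax2 (x + y) z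
  have hx := P.ax2 x z
  have hy := P.ax2 y z
  have hsymm : P.pair y x = P.pair x y := P.pair_symm y x
  simp only [P.op_add_left, P.op_add_right, map_add, LinearMap.add_apply,
    Derivation.map_add, Algebra.smul_def, hsymm] at h hx hy
  linear_combination h - hx - hy + (P.anchor z (P.pair x y)) * hc

private lemma pc_sym (P : PreCourantAlgebroid R E) (x y : E) :
    P.op x y + P.op y x = P.D (P.pair x y) := by
  have h : ∀ z, P.pair (P.op x y + P.op y x - P.D (P.pair x y)) z = 0 := by
    intro z
    simp only [map_sub, map_add, LinearMap.sub_apply, LinearMap.add_apply, P.pair_D]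
    linear_combination pc_polar P x y z
  exact sub_eq_zero.mp (P.pair_nondeg _ h)

private lemma pc_anchor_op_apply (P : PreCourantAlgebroid R E) (x y : E) (f : R) :
    P.anchor (P.op x y) f = P.anchor x (P.anchor y f) - P.anchor y (P.anchor x f) := by
  rw [P.anchor_op, Derivation.commutator_apply]

private lemma pc_op_D (P : PreCourantAlgebroid R E) (f : R) (z w : E) :
    P.pair (P.op (P.D f) z) w = 0 := by
  have h2 := congrArg (fun e => P.pair e w) (pc_sym P (P.D f) z)
  simp only [map_add, LinearMap.add_apply, P.pair_D] at h2
  have h3 := P.ax3 z (P.D f) w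
  rw [P.pair_D f w, P.pair_D f (P.op z w)] at h3
  have h4 := pc_anchor_op_apply P z w f
  linear_combination h2 + h3 + h4

private lemma pc_s12 (P : PreCourantAlgebroid R E) (x y z w : E) :
    P.pair (P.Jac x y z) w = - P.pair (P.Jac y x z) w := by
  have hsum : P.Jac x y z + P.Jac y x z = - P.op (P.D (P.pair x y)) z := by
    rw [← pc_sym P x y, P.op_add_left]
    unfold PreCourantAlgebroid.Jac
    abel
  have h := congrArg (fun e => P.pair e w) hsum
  simp only [map_add, map_neg, LinearMap.add_apply, LinearMap.neg_apply] at h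
  have h0 := pc_op_D P (P.pair x y) z w
  linear_combination h - h0

private lemma pc_s23 (P : PreCourantAlgebroid R E) (x y z w : E) :
    P.pair (P.Jac x y z) w = - P.pair (P.Jac x z y) w := by
  have hsum : P.Jac x y z + P.Jac x z y
      = P.op x (P.D (P.pair y z)) - P.D (P.pair (P.op x y) z)
        - P.D (P.pair (P.op x z) y) := by
    rw [← pc_sym P y z, ← pc_sym P (P.op x y) z, ← pc_sym P (P.op x z) y,
      P.op_add_right]
    unfold PreCourantAlgebroid.Jac
    abel
  have h := congrArg (fun e => P.pair e w) hsum
  simp only [map_add, map_sub, LinearMap.add_apply, LinearMap.sub_apply, P.pair_D] at h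
  -- pair (x ∘ D g) w :
  have h1 := P.ax3 x (P.D (P.pair y z)) w
  rw [P.pair_D _ w, P.pair_D _ (P.op x w)] at h1
  have h2 := pc_anchor_op_apply P x w (P.pair y z)
  -- anchor w of ax3 x y z :
  have h3 := congrArg (P.anchor w) (P.ax3 x y z)
  rw [Derivation.map_add] at h3
  have h4 : P.pair y (P.op x z) = P.pair (P.op x z) y := P.pair_symm _ _
  have h5 := congrArg (P.anchor w) h4
  linear_combination h - h1 - h2 + h3 + h5

private lemma pc_half (P : PreCourantAlgebroid R E) (e z : E) :
    P.pair (P.op e z) z + P.pair (P.op e z) z = P.anchor e (P.pair z z) := by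
  have h := P.ax3 e z z
  rw [P.pair_symm z (P.op e z)] at h
  linear_combination -h

private lemma pc_Z (P : PreCourantAlgebroid R E) (x y z : E) :
    P.pair (P.Jac x y z) z = 0 := by
  apply pc_half_cancel
  have hexp : P.pair (P.Jac x y z) z
      = P.pair (P.op x (P.op y z)) z - P.pair (P.op (P.op x y) z) z
        - P.pair (P.op y (P.op x z)) z := by
    unfold PreCourantAlgebroid.Jac
    simp only [map_sub, LinearMap.sub_apply]
  have h1 := P.ax3 x (P.op y z) z
  have h3 := P.ax3 y (P.op x z) z
  have h2 := pc_half P (P.op x y) z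
  rw [pc_anchor_op_apply P x y (P.pair z z)] at h2
  have h4 := congrArg (P.anchor x) (pc_half P y z)
  rw [Derivation.map_add] at h4
  have h5 := congrArg (P.anchor y) (pc_half P x z)
  rw [Derivation.map_add] at h5
  have hs : P.pair (P.op y z) (P.op x z) = P.pair (P.op x z) (P.op y z) :=
    P.pair_symm _ _
  rw [hexp]
  linear_combination -2 * h1 + h4 - h2 + 2 * h3 - h5 - 2 * hs

private lemma pc_s34 (P : PreCourantAlgebroid R E) (x y z w : E) :
    P.pair (P.Jac x y z) w = - P.pair (P.Jac x y w) z := by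
  have hJ : P.Jac x y (z + w) = P.Jac x y z + P.Jac x y w := by
    simp only [PreCourantAlgebroid.Jac, P.op_add_right]
    abel
  have hz := pc_Z P x y (z + w)
  rw [hJ] at hz
  simp only [map_add, LinearMap.add_apply] at hz
  have z1 := pc_Z P x y z
  have z2 := pc_Z P x y w
  linear_combination hz - z1 - z2

/-- Part of Theorem 3.4: the map `(e₁,e₂,e₃,e₄) ↦ ⟨J(e₁,e₂,e₃),e₄⟩` is totally
skew-symmetric; in particular `⟨J(e₁,e₂,e₃),e₄⟩ + ⟨J(e₄,e₂,e₃),e₁⟩ = 0`. -/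
theorem preCourant_pair_Jac_totally_skew (P : PreCourantAlgebroid R E)
    (e₁ e₂ e₃ e₄ : E) :
    P.pair (P.Jac e₁ e₂ e₃) e₄ = - P.pair (P.Jac e₂ e₁ e₃) e₄ ∧
    P.pair (P.Jac e₁ e₂ e₃) e₄ = - P.pair (P.Jac e₁ e₃ e₂) e₄ ∧
    P.pair (P.Jac e₁ e₂ e₃) e₄ = - P.pair (P.Jac e₁ e₂ e₄) e₃ ∧
    P.pair (P.Jac e₁ e₂ e₃) e₄ + P.pair (P.Jac e₄ e₂ e₃) e₁ = 0 := by
  refine ⟨pc_s12 P e₁ e₂ e₃ e₄, pc_s23 P e₁ e₂ e₃ e₄, pc_s34 P e₁ e₂ e₃ e₄, ?_⟩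
  have key : P.pair (P.Jac e₁ e₂ e₃) e₄ = - P.pair (P.Jac e₄ e₂ e₃) e₁ := by
    rw [pc_s23 P e₁ e₂ e₃ e₄, pc_s12 P e₁ e₃ e₂ e₄, pc_s34 P e₃ e₁ e₂ e₄,
      pc_s23 P e₃ e₁ e₄ e₂, pc_s12 P e₃ e₄ e₁ e₂, pc_s34 P e₄ e₃ e₁ e₂,
      pc_s23 P e₄ e₃ e₂ e₁]
    ring
  linear_combination key
end

section
/- For a pre-Courant algebroid, the Jacobiator J satisfies the cocycle condition ∂J = 0, i.e. for all sections e₁,e₂,e₃,e₄: e₁∘J(e₂,e₃,e₄) − e₂∘J(e₁,e₃,e₄) + e₃∘J(e₁,e₂,e₄) + J(e₁,e₂,e₃)∘e₄ − J(e₁∘e₂,e₃,e₄) + J(e₁∘e₃,e₂,e₄) − J(e₁∘e₄,e₂,e₃) − J(e₂∘e₃,e₁,e₄) + J(e₂∘e₄,e₁,e₃) − J(e₃∘e₄,e₁,e₂) = 0. -/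
variable {R : Type*} [CommRing R] [Algebra ℚ R]
variable {E : Type*} [AddCommGroup E] [Module R E]

lemma PreCourantAlgebroid.op_sub_left (P : PreCourantAlgebroid R E) (a b c : E) :
    P.op (a - b) c = P.op a c - P.op b c := by
  have h := P.op_add_left (a - b) b c
  rw [sub_add_cancel] at h
  exact eq_sub_of_add_eq h.symm

lemma PreCourantAlgebroid.op_sub_right (P : PreCourantAlgebroid R E) (a b c : E) :
    P.op a (b - c) = P.op a b - P.op a c := by
  have h := P.op_add_right a (b - c) c
  rw [sub_add_cancel] at h
  exact eq_sub_of_add_eq h.symm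

lemma PreCourantAlgebroid.anchor_op_apply (P : PreCourantAlgebroid R E) (a b : E) (f : R) :
    P.anchor (P.op a b) f = P.anchor a (P.anchor b f) - P.anchor b (P.anchor a f) := by
  rw [P.anchor_op]
  rfl

lemma PreCourantAlgebroid.polar (P : PreCourantAlgebroid R E) (a b v : E) :
    P.pair (P.op a b) v + P.pair (P.op b a) v = P.anchor v (P.pair a b) := by
  have h := P.ax2 (a + b) v
  have ha := P.ax2 a v
  have hb := P.ax2 b v
  rw [P.op_add_left, P.op_add_right, P.op_add_right] at h
  simp only [map_add, LinearMap.add_apply, P.pair_symm b a, Algebra.smul_def] at h ha hb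
  have h2 : (algebraMap ℚ R) (2⁻¹ : ℚ) * 2 = 1 := by
    rw [show (2 : R) = algebraMap ℚ R 2 by rw [map_ofNat], ← map_mul]
    norm_num
  linear_combination h - ha - hb + (P.anchor v) (P.pair a b) * h2

set_option maxHeartbeats 4000000 in
/-- Theorem 3.4: the Jacobiator satisfies the cocycle condition `∂J = 0`. -/
theorem preCourant_partial_Jac (P : PreCourantAlgebroid R E) (e₁ e₂ e₃ e₄ : E) :
    P.op e₁ (P.Jac e₂ e₃ e₄) - P.op e₂ (P.Jac e₁ e₃ e₄)
      + P.op e₃ (P.Jac e₁ e₂ e₄) + P.op (P.Jac e₁ e₂ e₃) e₄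
      - P.Jac (P.op e₁ e₂) e₃ e₄ + P.Jac (P.op e₁ e₃) e₂ e₄
      - P.Jac (P.op e₁ e₄) e₂ e₃ - P.Jac (P.op e₂ e₃) e₁ e₄
      + P.Jac (P.op e₂ e₄) e₁ e₃ - P.Jac (P.op e₃ e₄) e₁ e₂ = 0 := by
  refine P.pair_nondeg _ fun x => ?_
  simp only [PreCourantAlgebroid.Jac, P.op_sub_left, P.op_sub_right, P.op_add_left,
    P.op_add_right, map_sub, map_add, LinearMap.sub_apply, LinearMap.add_apply]
  have h0 := (P.ax3 e₁ x (P.op e₂ (P.op e₃ e₄)))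
  have h1 := (P.pair_symm x (P.op e₁ (P.op e₂ (P.op e₃ e₄))))
  have h2 := (P.ax3 e₁ x (P.op e₃ (P.op e₂ e₄)))
  have h3 := (P.pair_symm x (P.op e₁ (P.op e₃ (P.op e₂ e₄))))
  have h4 := (P.ax3 e₃ x (P.op e₁ (P.op e₂ e₄)))
  have h5 := (P.pair_symm x (P.op e₃ (P.op e₁ (P.op e₂ e₄))))
  have h6 := (P.ax3 e₂ x (P.op e₁ (P.op e₃ e₄)))
  have h7 := (P.pair_symm x (P.op e₂ (P.op e₁ (P.op e₃ e₄))))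
  have h8 := (P.ax3 e₂ x (P.op e₃ (P.op e₁ e₄)))
  have h9 := (P.pair_symm x (P.op e₂ (P.op e₃ (P.op e₁ e₄))))
  have h10 := (P.ax3 e₃ x (P.op e₂ (P.op e₁ e₄)))
  have h11 := (P.pair_symm x (P.op e₃ (P.op e₂ (P.op e₁ e₄))))
  have h12 := (P.ax3 (P.op e₁ (P.op e₂ e₃)) x e₄)
  simp only [map_add, map_sub, P.anchor_op_apply] at h12
  have h13 := (P.pair_symm x (P.op (P.op e₁ (P.op e₂ e₃)) e₄))
  have h14 := (P.ax3 (P.op e₂ (P.op e₁ e₃)) x e₄)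
  simp only [map_add, map_sub, P.anchor_op_apply] at h14
  have h15 := (P.pair_symm x (P.op (P.op e₂ (P.op e₁ e₃)) e₄))
  have h16 := (P.ax3 (P.op (P.op e₁ e₃) e₂) x e₄)
  simp only [map_add, map_sub, P.anchor_op_apply] at h16
  have h17 := (P.pair_symm x (P.op (P.op (P.op e₁ e₃) e₂) e₄))
  have h18 := (P.polar (P.op e₂ e₃) (P.op e₁ e₄) x)
  have h19 := congrArg (fun r => P.anchor x (r)) (P.ax3 e₂ e₃ (P.op e₁ e₄))
  simp only [map_add, map_sub, P.anchor_op_apply] at h19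
  have h20 := (P.polar e₃ (P.op (P.op e₁ e₄) e₂) x)
  have h21 := (P.ax3 e₃ x (P.op (P.op e₁ e₄) e₂))
  have h22 := congrArg (fun r => P.anchor e₃ (r)) (P.pair_symm x (P.op (P.op e₁ e₄) e₂))
  simp -failIfUnchanged only [map_add, map_sub, P.anchor_op_apply] at h22
  have h23 := (P.pair_symm (P.op e₃ x) (P.op (P.op e₁ e₄) e₂))
  have h24 := (P.pair_symm x (P.op e₃ (P.op (P.op e₁ e₄) e₂)))
  have h25 := congrArg (fun r => P.anchor e₃ (r)) (P.pair_symm x (P.op e₂ (P.op e₁ e₄)))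
  simp -failIfUnchanged only [map_add, map_sub, P.anchor_op_apply] at h25
  have h26 := congrArg (fun r => P.anchor e₃ (r)) (P.polar e₂ (P.op e₁ e₄) x)
  simp only [map_add, map_sub, P.anchor_op_apply] at h26
  have h27 := (P.pair_symm (P.op e₃ x) (P.op e₂ (P.op e₁ e₄)))
  have h28 := (P.polar e₂ (P.op e₁ e₄) (P.op e₃ x))
  simp only [map_add, map_sub, P.anchor_op_apply] at h28
  have h29 := congrArg (fun r => P.anchor x (r)) (P.pair_symm e₃ (P.op (P.op e₁ e₄) e₂))
  simp -failIfUnchanged only [map_add, map_sub, P.anchor_op_apply] at h29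
  have h30 := congrArg (fun r => P.anchor x (r)) (P.pair_symm e₃ (P.op e₂ (P.op e₁ e₄)))
  simp -failIfUnchanged only [map_add, map_sub, P.anchor_op_apply] at h30
  have h31 := congrArg (fun r => P.anchor x (r)) (P.polar e₂ (P.op e₁ e₄) e₃)
  simp only [map_add, map_sub, P.anchor_op_apply] at h31
  have h32 := (P.ax3 (P.op (P.op e₂ e₃) e₁) x e₄)
  simp only [map_add, map_sub, P.anchor_op_apply] at h32
  have h33 := (P.pair_symm x (P.op (P.op (P.op e₂ e₃) e₁) e₄))
  have h34 := (P.polar (P.op e₁ e₃) (P.op e₂ e₄) x)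
  have h35 := (P.polar e₃ (P.op (P.op e₂ e₄) e₁) x)
  have h36 := (P.ax3 e₃ x (P.op (P.op e₂ e₄) e₁))
  have h37 := congrArg (fun r => P.anchor e₃ (r)) (P.pair_symm x (P.op (P.op e₂ e₄) e₁))
  simp -failIfUnchanged only [map_add, map_sub, P.anchor_op_apply] at h37
  have h38 := (P.pair_symm (P.op e₃ x) (P.op (P.op e₂ e₄) e₁))
  have h39 := (P.pair_symm x (P.op e₃ (P.op (P.op e₂ e₄) e₁)))
  have h40 := congrArg (fun r => P.anchor e₃ (r)) (P.polar e₁ (P.op e₂ e₄) x)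
  simp only [map_add, map_sub, P.anchor_op_apply] at h40
  have h41 := congrArg (fun r => P.anchor e₃ (r)) (P.pair_symm x (P.op e₁ (P.op e₂ e₄)))
  simp -failIfUnchanged only [map_add, map_sub, P.anchor_op_apply] at h41
  have h42 := (P.polar e₁ (P.op e₂ e₄) (P.op e₃ x))
  simp only [map_add, map_sub, P.anchor_op_apply] at h42
  have h43 := (P.pair_symm (P.op e₃ x) (P.op e₁ (P.op e₂ e₄)))
  have h44 := congrArg (fun r => P.anchor x (r)) (P.pair_symm e₃ (P.op (P.op e₂ e₄) e₁))
  simp -failIfUnchanged only [map_add, map_sub, P.anchor_op_apply] at h44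
  have h45 := congrArg (fun r => P.anchor x (r)) (P.polar e₁ (P.op e₂ e₄) e₃)
  simp only [map_add, map_sub, P.anchor_op_apply] at h45
  have h46 := congrArg (fun r => P.anchor x (r)) (P.pair_symm e₃ (P.op e₁ (P.op e₂ e₄)))
  simp -failIfUnchanged only [map_add, map_sub, P.anchor_op_apply] at h46
  have h47 := congrArg (fun r => P.anchor x (r)) (P.ax3 e₁ e₃ (P.op e₂ e₄))
  simp only [map_add, map_sub, P.anchor_op_apply] at h47
  have h48 := (P.polar (P.op e₁ e₂) (P.op e₃ e₄) x)
  have h49 := (P.ax3 x (P.op (P.op e₁ e₃) e₂) e₄)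
  have h50 := (P.polar e₂ (P.op e₁ e₃) (P.op x e₄))
  simp only [map_add, map_sub, P.anchor_op_apply] at h50
  have h51 := congrArg (fun r => P.anchor x (r)) (P.polar e₂ (P.op e₁ e₃) e₄)
  simp only [map_add, map_sub, P.anchor_op_apply] at h51
  have h52 := congrArg (fun r => P.anchor e₂ (r)) (P.polar e₃ (P.op e₁ e₄) x)
  simp only [map_add, map_sub, P.anchor_op_apply] at h52
  have h53 := congrArg (fun r => P.anchor e₂ (r)) (P.pair_symm x (P.op e₃ (P.op e₁ e₄)))
  simp -failIfUnchanged only [map_add, map_sub, P.anchor_op_apply] at h53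
  have h54 := (P.ax3 e₂ x (P.op (P.op e₁ e₄) e₃))
  have h55 := congrArg (fun r => P.anchor e₂ (r)) (P.pair_symm x (P.op (P.op e₁ e₄) e₃))
  simp -failIfUnchanged only [map_add, map_sub, P.anchor_op_apply] at h55
  have h56 := (P.pair_symm x (P.op e₂ (P.op (P.op e₁ e₄) e₃)))
  have h57 := (P.ax3 x (P.op (P.op e₂ e₃) e₁) e₄)
  have h58 := (P.polar e₁ (P.op e₂ e₃) (P.op x e₄))
  simp only [map_add, map_sub, P.anchor_op_apply] at h58
  have h59 := congrArg (fun r => P.anchor x (r)) (P.polar e₁ (P.op e₂ e₃) e₄)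
  simp only [map_add, map_sub, P.anchor_op_apply] at h59
  have h60 := (P.polar (P.op (P.op e₂ e₃) e₁) x e₄)
  have h61 := congrArg (fun r => P.anchor e₁ (r)) (P.polar e₃ (P.op e₂ e₄) x)
  simp only [map_add, map_sub, P.anchor_op_apply] at h61
  have h62 := congrArg (fun r => P.anchor e₁ (r)) (P.pair_symm x (P.op e₃ (P.op e₂ e₄)))
  simp -failIfUnchanged only [map_add, map_sub, P.anchor_op_apply] at h62
  have h63 := (P.ax3 e₁ x (P.op (P.op e₂ e₄) e₃))
  have h64 := congrArg (fun r => P.anchor e₁ (r)) (P.pair_symm x (P.op (P.op e₂ e₄) e₃))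
  simp -failIfUnchanged only [map_add, map_sub, P.anchor_op_apply] at h64
  have h65 := (P.pair_symm x (P.op e₁ (P.op (P.op e₂ e₄) e₃)))
  have h66 := (P.polar e₃ (P.op e₁ e₄) (P.op e₂ x))
  simp only [map_add, map_sub, P.anchor_op_apply] at h66
  have h67 := (P.pair_symm (P.op e₂ x) (P.op e₃ (P.op e₁ e₄)))
  have h68 := (P.pair_symm (P.op e₂ x) (P.op (P.op e₁ e₄) e₃))
  have h69 := (P.polar e₃ (P.op e₂ e₄) (P.op e₁ x))
  simp only [map_add, map_sub, P.anchor_op_apply] at h69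
  have h70 := (P.pair_symm (P.op e₁ x) (P.op e₃ (P.op e₂ e₄)))
  have h71 := (P.pair_symm (P.op e₁ x) (P.op (P.op e₂ e₄) e₃))
  have h72 := congrArg (fun r => P.anchor e₄ (r)) (P.polar e₁ (P.op e₂ e₃) x)
  simp only [map_add, map_sub, P.anchor_op_apply] at h72
  have h73 := congrArg (fun r => P.anchor x (r)) (P.polar e₁ (P.op e₃ e₄) e₂)
  simp only [map_add, map_sub, P.anchor_op_apply] at h73
  have h74 := congrArg (fun r => P.anchor x (r)) (P.pair_symm e₂ (P.op e₁ (P.op e₃ e₄)))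
  simp -failIfUnchanged only [map_add, map_sub, P.anchor_op_apply] at h74
  have h75 := (P.polar e₂ (P.op (P.op e₃ e₄) e₁) x)
  have h76 := congrArg (fun r => P.anchor x (r)) (P.pair_symm e₂ (P.op (P.op e₃ e₄) e₁))
  simp -failIfUnchanged only [map_add, map_sub, P.anchor_op_apply] at h76
  have h77 := congrArg (fun r => P.anchor x (r)) (P.ax3 e₁ e₂ (P.op e₃ e₄))
  simp only [map_add, map_sub, P.anchor_op_apply] at h77
  have h78 := congrArg (fun r => P.anchor e₂ (r)) (P.polar e₁ (P.op e₃ e₄) x)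
  simp only [map_add, map_sub, P.anchor_op_apply] at h78
  have h79 := congrArg (fun r => P.anchor e₂ (r)) (P.pair_symm x (P.op e₁ (P.op e₃ e₄)))
  simp -failIfUnchanged only [map_add, map_sub, P.anchor_op_apply] at h79
  have h80 := (P.ax3 e₂ x (P.op (P.op e₃ e₄) e₁))
  have h81 := congrArg (fun r => P.anchor e₂ (r)) (P.pair_symm x (P.op (P.op e₃ e₄) e₁))
  simp -failIfUnchanged only [map_add, map_sub, P.anchor_op_apply] at h81
  have h82 := (P.pair_symm x (P.op e₂ (P.op (P.op e₃ e₄) e₁)))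
  have h83 := congrArg (fun r => P.anchor e₁ (r)) (P.polar e₂ (P.op e₃ e₄) x)
  simp only [map_add, map_sub, P.anchor_op_apply] at h83
  have h84 := congrArg (fun r => P.anchor e₁ (r)) (P.pair_symm x (P.op e₂ (P.op e₃ e₄)))
  simp -failIfUnchanged only [map_add, map_sub, P.anchor_op_apply] at h84
  have h85 := (P.ax3 e₁ x (P.op (P.op e₃ e₄) e₂))
  have h86 := congrArg (fun r => P.anchor e₁ (r)) (P.pair_symm x (P.op (P.op e₃ e₄) e₂))
  simp -failIfUnchanged only [map_add, map_sub, P.anchor_op_apply] at h86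
  have h87 := (P.pair_symm (P.op e₁ x) (P.op (P.op e₃ e₄) e₂))
  have h88 := (P.pair_symm x (P.op e₁ (P.op (P.op e₃ e₄) e₂)))
  have h89 := (P.pair_symm (P.op e₁ x) (P.op e₂ (P.op e₃ e₄)))
  have h90 := (P.polar e₂ (P.op e₃ e₄) (P.op e₁ x))
  simp only [map_add, map_sub, P.anchor_op_apply] at h90
  have h91 := (P.polar e₁ (P.op e₃ e₄) (P.op e₂ x))
  simp only [map_add, map_sub, P.anchor_op_apply] at h91
  have h92 := (P.pair_symm (P.op e₂ x) (P.op e₁ (P.op e₃ e₄)))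
  have h93 := (P.pair_symm (P.op e₂ x) (P.op (P.op e₃ e₄) e₁))
  have h94 := (P.polar (P.op (P.op e₁ e₃) e₂) x e₄)
  have h95 := congrArg (fun r => P.anchor e₄ (r)) (P.polar e₂ (P.op e₁ e₃) x)
  simp only [map_add, map_sub, P.anchor_op_apply] at h95
  have h96 := (P.ax3 x (P.op e₁ (P.op e₂ e₃)) e₄)
  have h97 := (P.polar (P.op e₁ (P.op e₂ e₃)) x e₄)
  have h98 := (P.ax3 x (P.op e₂ (P.op e₁ e₃)) e₄)
  have h99 := (P.polar (P.op e₂ (P.op e₁ e₃)) x e₄)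
  linear_combination -h0 - h1 + h2 + h3 - h4 - h5 + h6 + h7 - h8 - h9 + h10 + h11 - h12 - h13 + h14 + h15 + h16 + h17 - h18 + h19 + h20 + h21 - h22 + h23 + h24 - h25 - h26 + h27 + h28 + h29 + h30 + h31 - h32 - h33 + h34 - h35 - h36 + h37 - h38 - h39 + h40 + h41 - h42 - h43 - h44 - h45 - h46 - h47 - h48 + h49 + h50 - h51 + h52 + h53 - h54 + h55 - h56 - h57 - h58 + h59 - h60 - h61 - h62 + h63 - h64 + h65 - h66 - h67 - h68 + h69 + h70 + h71 - h72 + h73 + h74 + h75 + h76 + h77 - h78 - h79 + h80 - h81 + h82 + h83 + h84 - h85 + h86 - h87 - h88 - h89 - h90 + h91 + h92 + h93 + h94 + h95 - h96 - h97 + h98 + h99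
end

section
/- Associated to any pre-Courant algebroid (E,⟨·,·⟩,ρ,∘) there is a Leibniz 2-algebra on the complex Γ(Ker ρ) → Γ(E) (with d the inclusion), with l₂ given by the operation ∘ and l₃ given by the Jacobiator J; i.e. all Leibniz 2-algebra axioms (a1)–(a3), (b1)–(b4) and the Jacobiator identity (c) hold. -/
namespace PreCourantAlgebroid
variable {R : Type*} [CommRing R] [Algebra ℚ R]
variable {E : Type*} [AddCommGroup E] [Module R E] (P : PreCourantAlgebroid R E)

lemma op_zero_right (e : E) : P.op e 0 = 0 := by
  have h := P.op_add_right e 0 0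
  rw [add_zero] at h
  nth_rewrite 1 [← add_zero (P.op e 0)] at h
  exact (add_left_cancel h).symm

lemma op_zero_left (e : E) : P.op 0 e = 0 := by
  have h := P.op_add_left 0 0 e
  rw [add_zero] at h
  nth_rewrite 1 [← add_zero (P.op 0 e)] at h
  exact (add_left_cancel h).symm

lemma op_neg_right (e₁ e₂ : E) : P.op e₁ (-e₂) = -P.op e₁ e₂ := by
  have h := P.op_add_right e₁ e₂ (-e₂)
  rw [add_neg_cancel, op_zero_right] at h
  exact eq_neg_of_add_eq_zero_right h.symm

lemma op_neg_left (e₁ e₂ : E) : P.op (-e₁) e₂ = -P.op e₁ e₂ := by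
  have h := P.op_add_left e₁ (-e₁) e₂
  rw [add_neg_cancel, op_zero_left] at h
  exact eq_neg_of_add_eq_zero_right h.symm

lemma op_sub_right_s12 (e₁ e₂ e₃ : E) : P.op e₁ (e₂ - e₃) = P.op e₁ e₂ - P.op e₁ e₃ := by
  rw [sub_eq_add_neg, P.op_add_right, op_neg_right, sub_eq_add_neg]

lemma op_sub_left_s12 (e₁ e₂ e₃ : E) : P.op (e₁ - e₂) e₃ = P.op e₁ e₃ - P.op e₂ e₃ := by
  rw [sub_eq_add_neg, P.op_add_left, op_neg_left, sub_eq_add_neg]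

end PreCourantAlgebroid

variable {R : Type*} [CommRing R] [Algebra ℚ R]
variable {E : Type*} [AddCommGroup E] [Module R E]

/-- Theorem 4.1: associated to any pre-Courant algebroid there is a Leibniz
2-algebra on `Γ(Ker ρ) → Γ(E)` (with `d` the inclusion), with `l₂ = ∘` and
`l₃ = J`: the operation preserves the kernel (so `l₂` is well defined in
degree 1, giving (a1)-(a3)), the Jacobiator lands in the kernel,
(b1)-(b4) hold, and the coherence (Jacobiator) identity (c) holds. -/
theorem preCourant_Leibniz2 (P : PreCourantAlgebroid R E) :
    (∀ x m : E, P.anchor m = 0 → P.anchor (P.op x m) = 0) ∧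
    (∀ m x : E, P.anchor m = 0 → P.anchor (P.op m x) = 0) ∧
    (∀ x y z : E, P.anchor (P.Jac x y z) = 0) ∧
    (∀ x y z : E,
      P.Jac x y z = P.op x (P.op y z) - P.op (P.op x y) z - P.op y (P.op x z)) ∧
    (∀ w x y z : E,
      P.op w (P.Jac x y z) - P.op x (P.Jac w y z) + P.op y (P.Jac w x z)
        + P.op (P.Jac w x y) z
        - P.Jac (P.op w x) y z - P.Jac x (P.op w y) z - P.Jac x y (P.op w z)
        + P.Jac w (P.op x y) z + P.Jac w y (P.op x z) - P.Jac w x (P.op y z)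
        = 0) := by
  refine ⟨?_, ?_, ?_, ?_, ?_⟩
  · intro x m hm
    rw [P.anchor_op, hm]
    ext f
    simp
  · intro m x hm
    rw [P.anchor_op, hm]
    ext f
    simp
  · intro x y z
    simp only [PreCourantAlgebroid.Jac, map_sub, P.anchor_op]
    ext f
    simp only [Derivation.commutator_apply, Derivation.sub_apply, Derivation.zero_apply,
      Derivation.coe_sub, Pi.sub_apply, map_sub]
    abel
  · intro x y z
    rfl
  · intro w x y z
    simp only [PreCourantAlgebroid.Jac, P.op_sub_left_s12, P.op_sub_right_s12, P.op_add_left,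
      P.op_add_right]
    abel
end

section
/- Let (E,⟨·,·⟩,ρ,∘) be a pre-Courant algebroid and ω: Γ(E)×Γ(E)→Γ(E) a C^∞(M)-bilinear skew-symmetric map. Then the deformed operation e₁∘̃e₂ = e₁∘e₂ + ω(e₁,e₂) is again a pre-Courant algebroid structure if and only if: Im(ω) ⊂ Ker(ρ), ω(Df,·)=0 for all f, and the map (e₁,e₂,e₃) ↦ ⟨ω(e₁,e₂),e₃⟩ is totally skew-symmetric. -/
variable {R : Type*} [CommRing R] [Algebra ℚ R]
variable {E : Type*} [AddCommGroup E] [Module R E]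

/-- Lemma 4.2: for a `C^∞(M)`-bilinear skew-symmetric `ω`, the deformed
operation `∘̃ = ∘ + ω` is again a pre-Courant algebroid structure if and only
if the image of `ω` lies in `Ker ρ`, `ω(Df,·) = 0`, and
`(e₁,e₂,e₃) ↦ ⟨ω(e₁,e₂),e₃⟩` is totally skew-symmetric. -/
theorem preCourant_deform_iff (P : PreCourantAlgebroid R E)
    (ω : E →ₗ[R] E →ₗ[R] E) (hskew : ∀ e₁ e₂ : E, ω e₁ e₂ = - ω e₂ e₁) :
    ((∀ e₁ e₂ : E,
        P.anchor (P.op e₁ e₂ + ω e₁ e₂) = ⁅P.anchor e₁, P.anchor e₂⁆) ∧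
     (∀ e₁ e₂ : E,
        P.pair (P.op e₁ e₁ + ω e₁ e₁) e₂ = (2⁻¹ : ℚ) • (P.anchor e₂ (P.pair e₁ e₁))) ∧
     (∀ e₁ e₂ e₃ : E,
        P.anchor e₁ (P.pair e₂ e₃) =
          P.pair (P.op e₁ e₂ + ω e₁ e₂) e₃ + P.pair e₂ (P.op e₁ e₃ + ω e₁ e₃)))
    ↔
    ((∀ e₁ e₂ : E, P.anchor (ω e₁ e₂) = 0) ∧
     (∀ (f : R) (e : E), ω (P.D f) e = 0) ∧
     (∀ e₁ e₂ e₃ : E,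
        P.pair (ω e₁ e₂) e₃ = - P.pair (ω e₂ e₁) e₃ ∧
        P.pair (ω e₁ e₂) e₃ = - P.pair (ω e₁ e₃) e₂)) := by
  constructor
  · rintro ⟨h1, h2, h3⟩
    have hker : ∀ e₁ e₂ : E, P.anchor (ω e₁ e₂) = 0 := by
      intro e₁ e₂
      have h := h1 e₁ e₂
      rw [map_add, P.anchor_op] at h
      exact add_eq_left.mp h
    have hsum : ∀ e₁ e₂ e₃ : E,
        P.pair (ω e₁ e₂) e₃ + P.pair e₂ (ω e₁ e₃) = 0 := by
      intro e₁ e₂ e₃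
      have h := h3 e₁ e₂ e₃
      simp only [map_add, LinearMap.add_apply] at h
      linear_combination P.ax3 e₁ e₂ e₃ - h
    have hsk2 : ∀ e₁ e₂ e₃ : E, P.pair (ω e₁ e₂) e₃ = - P.pair (ω e₁ e₃) e₂ := by
      intro e₁ e₂ e₃
      have h := hsum e₁ e₂ e₃
      rw [P.pair_symm e₂ (ω e₁ e₃)] at h
      linear_combination h
    have hsk1 : ∀ e₁ e₂ e₃ : E, P.pair (ω e₁ e₂) e₃ = - P.pair (ω e₂ e₁) e₃ := by
      intro e₁ e₂ e₃
      rw [hskew e₁ e₂]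
      simp
    refine ⟨hker, ?_, fun e₁ e₂ e₃ => ⟨hsk1 e₁ e₂ e₃, hsk2 e₁ e₂ e₃⟩⟩
    intro f e
    apply P.pair_nondeg
    intro e'
    have t1 : P.pair (ω (P.D f) e) e' = P.pair (ω e e') (P.D f) := by
      rw [hskew (P.D f) e]
      simp only [map_neg, LinearMap.neg_apply]
      rw [hsk2 e (P.D f) e']
      ring
    rw [t1, ← P.pair_symm, P.pair_D, hker]
    simp
  · rintro ⟨hker, hD, hsk⟩
    refine ⟨?_, ?_, ?_⟩
    · intro e₁ e₂
      rw [map_add, P.anchor_op, hker, add_zero]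
    · intro e₁ e₂
      have hzero : P.pair (ω e₁ e₁) e₂ = 0 := by
        have h := (hsk e₁ e₁ e₂).1
        have h2 : (2 : ℚ) • P.pair (ω e₁ e₁) e₂ = 0 := by
          rw [two_smul]
          linear_combination h
        have h3 := congrArg (fun y => (2⁻¹ : ℚ) • y) h2
        simpa [smul_smul] using h3
      rw [map_add, LinearMap.add_apply, hzero, add_zero, P.ax2]
    · intro e₁ e₂ e₃
      simp only [map_add, LinearMap.add_apply]
      linear_combination P.ax3 e₁ e₂ e₃ - (hsk e₁ e₂ e₃).2 -
        P.pair_symm e₂ (ω e₁ e₃)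
end

section
/- For a pre-Courant algebroid E, the data 𝓔: Γ(Ker ρ) → Γ(E) with l₂ the skew-symmetric bracket [e₁,e₂]=(1/2)(e₁∘e₂−e₂∘e₁) and l₃ = 𝒥 (the Jacobiator of [·,·]) form a Lie 2-algebra, i.e. a 2-term L∞-algebra; in particular the higher Jacobiator identity Σᵢ(−1)^{i+1}[eᵢ, 𝒥(e₁,…,êᵢ,…,e₄)] + Σ_{i<j}(−1)^{i+j}𝒥([eᵢ,e_j],e₁,…,êᵢ,…,ê_j,…,e₄) = 0 holds. -/
variable {R : Type*} [CommRing R] [Algebra ℚ R]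
variable {E : Type*} [AddCommGroup E] [Module R E]

/-- The skew-symmetrized bracket of a pre-Courant algebroid. -/
def PreCourantAlgebroid.skewBr (P : PreCourantAlgebroid R E) (e₁ e₂ : E) : E :=
  (algebraMap ℚ R (2⁻¹ : ℚ)) • (P.op e₁ e₂ - P.op e₂ e₁)

/-- The Jacobiator of the skew-symmetrized bracket. -/
def PreCourantAlgebroid.skewJac (P : PreCourantAlgebroid R E) (e₁ e₂ e₃ : E) : E :=
  P.skewBr e₁ (P.skewBr e₂ e₃) + P.skewBr e₃ (P.skewBr e₁ e₂)
    + P.skewBr e₂ (P.skewBr e₃ e₁)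

/-- Theorem 4.6: the complex `Γ(Ker ρ) → Γ(E)` with `l₂` the skew-symmetrized
bracket and `l₃ = 𝒥` is a Lie 2-algebra: the bracket is skew-symmetric, `l₂`
and `l₃` are compatible with the kernel, and the higher Jacobiator identity
holds. -/
theorem preCourant_Lie2 (P : PreCourantAlgebroid R E) :
    (∀ e₁ e₂ : E, P.skewBr e₁ e₂ = - P.skewBr e₂ e₁) ∧
    (∀ x κ : E, P.anchor κ = 0 → P.anchor (P.skewBr x κ) = 0) ∧
    (∀ x y z : E, P.anchor (P.skewJac x y z) = 0) ∧
    (∀ e₁ e₂ e₃ e₄ : E,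
      P.skewBr e₁ (P.skewJac e₂ e₃ e₄) - P.skewBr e₂ (P.skewJac e₁ e₃ e₄)
        + P.skewBr e₃ (P.skewJac e₁ e₂ e₄) - P.skewBr e₄ (P.skewJac e₁ e₂ e₃)
        - P.skewJac (P.skewBr e₁ e₂) e₃ e₄ + P.skewJac (P.skewBr e₁ e₃) e₂ e₄
        - P.skewJac (P.skewBr e₁ e₄) e₂ e₃ - P.skewJac (P.skewBr e₂ e₃) e₁ e₄
        + P.skewJac (P.skewBr e₂ e₄) e₁ e₃ - P.skewJac (P.skewBr e₃ e₄) e₁ e₂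
        = 0) := by
  have hskew : ∀ x y : E, P.skewBr x y = - P.skewBr y x := by
    intro x y
    rw [PreCourantAlgebroid.skewBr, PreCourantAlgebroid.skewBr, ← smul_neg, neg_sub]
  have hadd_r : ∀ x y z : E, P.skewBr x (y + z) = P.skewBr x y + P.skewBr x z := by
    intro x y z
    simp only [PreCourantAlgebroid.skewBr, P.op_add_right, P.op_add_left, ← smul_add]
    congr 1
    abel
  have hzero_r : ∀ x : E, P.skewBr x 0 = 0 := by
    intro x
    have h : P.skewBr x 0 = P.skewBr x 0 + P.skewBr x 0 := by
      simpa using hadd_r x 0 0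
    exact left_eq_add.mp h
  have hneg_r : ∀ x y : E, P.skewBr x (-y) = - P.skewBr x y := by
    intro x y
    have h := hadd_r x y (-y)
    rw [add_neg_cancel, hzero_r] at h
    exact (neg_eq_of_add_eq_zero_right h.symm).symm
  have key : ∀ x w : E, P.anchor (P.skewBr x w) = ⁅P.anchor x, P.anchor w⁆ := by
    intro x w
    rw [PreCourantAlgebroid.skewBr, map_smul, map_sub, P.anchor_op, P.anchor_op,
      ← lie_skew (P.anchor w) (P.anchor x), sub_neg_eq_add]
    rw [show ⁅P.anchor x, P.anchor w⁆ + ⁅P.anchor x, P.anchor w⁆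
        = ((algebraMap ℚ R) 2) • ⁅P.anchor x, P.anchor w⁆ by
      rw [show ((2 : ℚ)) = (1 : ℚ) + 1 by norm_num, map_add, add_smul, map_one, one_smul]]
    rw [smul_smul, ← map_mul]
    norm_num
  refine ⟨hskew, ?_, ?_, ?_⟩
  · intro x κ hκ
    rw [key, hκ, lie_zero]
  · intro x y z
    simp only [PreCourantAlgebroid.skewJac, map_add, key]
    have := lie_jacobi (P.anchor x) (P.anchor y) (P.anchor z)
    linear_combination (norm := abel) this
  · intro e₁ e₂ e₃ e₄
    simp only [PreCourantAlgebroid.skewJac, hadd_r, hneg_r,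
      hskew e₂ e₁, hskew e₃ e₁, hskew e₄ e₁, hskew e₃ e₂, hskew e₄ e₂, hskew e₄ e₃,
      hskew (P.skewBr e₁ e₂) e₃, hskew (P.skewBr e₁ e₂) e₄,
      hskew (P.skewBr e₁ e₃) e₂, hskew (P.skewBr e₁ e₃) e₄,
      hskew (P.skewBr e₁ e₄) e₂, hskew (P.skewBr e₁ e₄) e₃,
      hskew (P.skewBr e₂ e₃) e₁, hskew (P.skewBr e₂ e₃) e₄,
      hskew (P.skewBr e₂ e₄) e₁, hskew (P.skewBr e₂ e₄) e₃,
      hskew (P.skewBr e₃ e₄) e₁, hskew (P.skewBr e₃ e₄) e₂,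
      hskew (P.skewBr e₃ e₄) (P.skewBr e₁ e₂),
      hskew (P.skewBr e₂ e₄) (P.skewBr e₁ e₃),
      hskew (P.skewBr e₂ e₃) (P.skewBr e₁ e₄)]
    abel
end

section
/- Let E be a regular pre-Courant algebroid such that J(e₁,e₂,e₃) ∈ Γ((Ker ρ)^⊥) for all sections. Then J(κ,·,·) = 0 for all κ ∈ Γ(Ker ρ); conversely, if J(κ,·,·)=0 for all κ ∈ Γ(Ker ρ), then J(e₁,e₂,e₃) ∈ Γ((Ker ρ)^⊥) for all sections. -/
variable {R : Type*} [CommRing R] [Algebra ℚ R]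
variable {E : Type*} [AddCommGroup E] [Module R E]

namespace PCAux

lemma hhalf : (algebraMap ℚ R) 2⁻¹ * 2 = 1 := by
  rw [show (2:R) = algebraMap ℚ R 2 from (map_ofNat _ 2).symm, ← map_mul]
  norm_num

lemma half_smul {M : Type*} [AddCommGroup M] [Module R M] {x : M}
    (h : x + x = 0) : x = 0 := by
  have h2 : (2 : R) • x = 0 := by rw [two_smul]; exact h
  have h3 : ((algebraMap ℚ R 2⁻¹) * 2) • x = 0 := by rw [mul_smul, h2, smul_zero]
  rwa [hhalf, one_smul] at h3

variable (P : PreCourantAlgebroid R E)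

lemma pair_ext {x y : E} (h : ∀ c : E, P.pair x c = P.pair y c) : x = y := by
  have := P.pair_nondeg (x - y) (fun c => by simp [map_sub, LinearMap.sub_apply, h c])
  rwa [sub_eq_zero] at this

lemma anchor_D (f : R) : P.anchor (P.D f) = 0 := by
  refine P.coiso _ (fun κ hκ => ?_)
  rw [P.pair_D, hκ]; rfl

lemma pair_op_polar (a b c : E) :
    P.pair (P.op a b) c + P.pair (P.op b a) c = P.anchor c (P.pair a b) := by
  have ha := P.ax2 a c
  have hb := P.ax2 b c
  have hab := P.ax2 (a + b) c
  simp only [P.op_add_left, P.op_add_right, map_add, LinearMap.add_apply,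
    Algebra.smul_def] at ha hb hab
  have hx : P.anchor c (P.pair b a) = P.anchor c (P.pair a b) :=
    congrArg (fun r => P.anchor c r) (P.pair_symm b a)
  linear_combination hab - ha - hb + (algebraMap ℚ R) 2⁻¹ * hx
    + P.anchor c (P.pair a b) * (hhalf (R := R))

lemma op_symm (a b : E) : P.op a b + P.op b a = P.D (P.pair a b) := by
  refine pair_ext P (fun c => ?_)
  rw [P.pair_D]
  simpa [map_add, LinearMap.add_apply] using pair_op_polar P a b c

lemma D_add (f g : R) : P.D (f + g) = P.D f + P.D g := by
  refine pair_ext P (fun c => ?_)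
  simp [P.pair_D, map_add, LinearMap.add_apply]

lemma op_D_left (f : R) (e : E) : P.op (P.D f) e = 0 := by
  refine pair_ext P (fun d => ?_)
  have hsym := op_symm P (P.D f) e
  rw [P.pair_D] at hsym
  have h1 : P.pair (P.op (P.D f) e) d + P.pair (P.op e (P.D f)) d
      = P.anchor d (P.anchor e f) := by
    have := congrArg (fun x => P.pair x d) hsym
    simpa [map_add, LinearMap.add_apply, P.pair_D] using this
  have h2 := P.ax3 e (P.D f) d
  rw [P.pair_D, P.pair_D] at h2
  have h3 : P.anchor (P.op e d) f
      = P.anchor e (P.anchor d f) - P.anchor d (P.anchor e f) := by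
    rw [P.anchor_op, Derivation.commutator_apply]
  rw [h3] at h2
  simp only [map_zero, LinearMap.zero_apply]
  linear_combination h1 + h2

lemma op_D_right (f : R) (e : E) : P.op e (P.D f) = P.D (P.anchor e f) := by
  have hsym := op_symm P (P.D f) e
  rw [P.pair_D, op_D_left, zero_add] at hsym
  exact hsym

lemma pair_Jac_same (a b c : E) : P.pair (P.Jac a b c) c = 0 := by
  have key : P.pair (P.Jac a b c) c + P.pair (P.Jac a b c) c = 0 := by
    simp only [PreCourantAlgebroid.Jac, map_sub, LinearMap.sub_apply]
    have h1 := P.ax3 a (P.op b c) c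
    have h3 := P.ax3 b (P.op a c) c
    have h2 := P.ax3 (P.op a b) c c
    have hbc := P.ax3 b c c
    have hac := P.ax3 a c c
    have hA : P.anchor a (P.pair (P.op b c) c) + P.anchor a (P.pair c (P.op b c))
        = P.anchor a (P.anchor b (P.pair c c)) := by
      rw [← map_add]; exact congrArg (fun r => P.anchor a r) hbc.symm
    have hB : P.anchor b (P.pair (P.op a c) c) + P.anchor b (P.pair c (P.op a c))
        = P.anchor b (P.anchor a (P.pair c c)) := by
      rw [← map_add]; exact congrArg (fun r => P.anchor b r) hac.symm
    have hC : P.anchor (P.op a b) (P.pair c c)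
        = P.anchor a (P.anchor b (P.pair c c)) - P.anchor b (P.anchor a (P.pair c c)) := by
      rw [P.anchor_op, Derivation.commutator_apply]
    have s1 : P.pair (P.op b c) c = P.pair c (P.op b c) := P.pair_symm _ _
    have s2 : P.pair (P.op a c) c = P.pair c (P.op a c) := P.pair_symm _ _
    have s3 : P.pair (P.op b c) (P.op a c) = P.pair (P.op a c) (P.op b c) := P.pair_symm _ _
    have s4 : P.pair c (P.op (P.op a b) c) = P.pair (P.op (P.op a b) c) c := P.pair_symm _ _
    have hs1 : P.anchor a (P.pair (P.op b c) c) = P.anchor a (P.pair c (P.op b c)) :=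
      congrArg (fun r => P.anchor a r) s1
    have hs2 : P.anchor b (P.pair (P.op a c) c) = P.anchor b (P.pair c (P.op a c)) :=
      congrArg (fun r => P.anchor b r) s2
    linear_combination (-2 : R) * h1 + 2 * h3 + h2 + hA - hB - hC + hs1 - hs2 - 2 * s3 + s4
  exact half_smul (R := R) key

lemma Jac_same23 (a b : E) : P.Jac a b b = 0 := by
  have key : P.Jac a b b + P.Jac a b b = 0 := by
    have hbb : P.op b b + P.op b b = P.D (P.pair b b) := op_symm P b b
    have h1 : P.op a (P.op b b) + P.op a (P.op b b) = P.D (P.anchor a (P.pair b b)) := by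
      rw [← P.op_add_right, hbb, op_D_right]
    have h2 : P.op (P.op a b) b + P.op b (P.op a b) = P.D (P.pair (P.op a b) b) :=
      op_symm P _ _
    have h3 : P.pair (P.op a b) b + P.pair (P.op a b) b = P.anchor a (P.pair b b) := by
      have := P.ax3 a b b
      rw [P.pair_symm b (P.op a b)] at this
      linear_combination -this
    have h4 : P.D (P.pair (P.op a b) b) + P.D (P.pair (P.op a b) b)
        = P.D (P.anchor a (P.pair b b)) := by
      rw [← D_add, h3]
    simp only [PreCourantAlgebroid.Jac]
    have expand : P.op a (P.op b b) - P.op (P.op a b) b - P.op b (P.op a b)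
        + (P.op a (P.op b b) - P.op (P.op a b) b - P.op b (P.op a b))
        = (P.op a (P.op b b) + P.op a (P.op b b))
          - ((P.op (P.op a b) b + P.op b (P.op a b)) + (P.op (P.op a b) b + P.op b (P.op a b))) := by
      abel
    rw [expand, h1, h2, h4, sub_self]
  exact half_smul (R := R) key

lemma Jac_add1 (a a' b c : E) : P.Jac (a + a') b c = P.Jac a b c + P.Jac a' b c := by
  simp only [PreCourantAlgebroid.Jac, P.op_add_left, P.op_add_right]; abel

lemma Jac_add2 (a b b' c : E) : P.Jac a (b + b') c = P.Jac a b c + P.Jac a b' c := by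
  simp only [PreCourantAlgebroid.Jac, P.op_add_left, P.op_add_right]; abel

lemma Jac_add3 (a b c c' : E) : P.Jac a b (c + c') = P.Jac a b c + P.Jac a b c' := by
  simp only [PreCourantAlgebroid.Jac, P.op_add_left, P.op_add_right]; abel

lemma Jac_swap12 (a b c : E) : P.Jac a b c + P.Jac b a c = 0 := by
  have : P.Jac a b c + P.Jac b a c
      = - P.op (P.op a b + P.op b a) c := by
    simp only [PreCourantAlgebroid.Jac, P.op_add_left]; abel
  rw [this, op_symm, op_D_left, neg_zero]

lemma Jac_swap23 (a b c : E) : P.Jac a b c + P.Jac a c b = 0 := by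
  have h := Jac_same23 P a (b + c)
  rw [Jac_add2, Jac_add3, Jac_add3, Jac_same23, Jac_same23] at h
  have : P.Jac a b c + P.Jac a c b = 0 + P.Jac a b c + (P.Jac a c b + 0) := by abel
  rw [this, h]

lemma pair_Jac_swap34 (a b c d : E) :
    P.pair (P.Jac a b c) d + P.pair (P.Jac a b d) c = 0 := by
  have h := pair_Jac_same P a b (c + d)
  rw [Jac_add3, map_add] at h
  simp only [LinearMap.add_apply, map_add] at h
  have h1 := pair_Jac_same P a b c
  have h2 := pair_Jac_same P a b d
  linear_combination h - h1 - h2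

/-- The key skewness identity: `⟨J(a,b,c),d⟩ = -⟨J(d,a,b),c⟩`. -/
lemma pair_Jac_key (a b c d : E) :
    P.pair (P.Jac a b c) d = - P.pair (P.Jac d a b) c := by
  have h34 := pair_Jac_swap34 P a b c d
  have hswap : P.Jac a b d = P.Jac d a b := by
    have h23 := Jac_swap23 P a b d
    have h12 := Jac_swap12 P a d b
    rw [eq_neg_of_add_eq_zero_left h23, eq_neg_of_add_eq_zero_left h12, neg_neg]
  rw [hswap] at h34
  linear_combination h34

end PCAux

/-- Proposition 5.2 ((S1) ⟺ (S2)): `J` takes values in `(Ker ρ)^⊥` if and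
only if `J(κ,·,·) = 0` for all `κ ∈ Γ(Ker ρ)`. -/
theorem preCourant_J_perp_iff (P : PreCourantAlgebroid R E) :
    (∀ e₁ e₂ e₃ κ : E, P.anchor κ = 0 → P.pair (P.Jac e₁ e₂ e₃) κ = 0)
    ↔ (∀ κ : E, P.anchor κ = 0 → ∀ e₁ e₂ : E, P.Jac κ e₁ e₂ = 0) := by
  constructor
  · intro hS1 κ hκ e₁ e₂
    refine PCAux.pair_ext P (fun c => ?_)
    rw [map_zero, LinearMap.zero_apply]
    have h := PCAux.pair_Jac_key P e₁ e₂ c κ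
    rw [hS1 e₁ e₂ c κ hκ] at h
    linear_combination h
  · intro hS2 e₁ e₂ e₃ κ hκ
    rw [PCAux.pair_Jac_key P e₁ e₂ e₃ κ, hS2 κ hκ e₁ e₂, map_zero,
      LinearMap.zero_apply, neg_zero]
end

section
/- Let (E,⟨·,·⟩,ρ) be a Courant vector bundle, ∇ a metric connection on E (X⟨e₁,e₂⟩ = ⟨∇_X e₁,e₂⟩ + ⟨e₁,∇_X e₂⟩), and β ∈ Γ(∧²E*⊗E) such that (e₁,e₂,e₃) ↦ ⟨β(e₁,e₂),e₃⟩ is totally skew-symmetric and ρ(β(e₁,e₂)) = [ρ(e₁),ρ(e₂)] − ρ(∇_{ρ(e₁)}e₂ − ∇_{ρ(e₂)}e₁). Then the operation e₁∘e₂ = ∇_{ρ(e₁)}e₂ − ∇_{ρ(e₂)}e₁ + ρ*⟨∇e₁,e₂⟩ + β(e₁,e₂), where ⟨ρ*⟨∇e₁,e₂⟩, e⟩ = ⟨∇_{ρ(e)}e₁, e₂⟩, defines a pre-Courant algebroid structure on E. -/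
/-- A Courant vector bundle: pseudo-metric, anchor with `ρρ* = 0`, and the
operator `D` defined by `⟨Df,e⟩ = ρ(e)f`. -/
structure CourantVectorBundle (R : Type*) [CommRing R] [Algebra ℚ R]
    (E : Type*) [AddCommGroup E] [Module R E] where
  pair : E →ₗ[R] E →ₗ[R] R
  pair_symm : ∀ e₁ e₂ : E, pair e₁ e₂ = pair e₂ e₁
  pair_nondeg : ∀ e : E, (∀ e' : E, pair e e' = 0) → e = 0
  anchor : E →ₗ[R] Derivation ℚ R R
  coiso : ∀ e : E, (∀ κ : E, anchor κ = 0 → pair e κ = 0) → anchor e = 0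
  D : R → E
  pair_D : ∀ (f : R) (e : E), pair (D f) e = anchor e f

variable {R : Type*} [CommRing R] [Algebra ℚ R]
variable {E : Type*} [AddCommGroup E] [Module R E]

/-- Proposition 6.1: a metric connection `∇` together with a suitable `β`
defines a pre-Courant algebroid structure
`e₁∘e₂ = ∇_{ρ(e₁)}e₂ − ∇_{ρ(e₂)}e₁ + ρ*⟨∇e₁,e₂⟩ + β(e₁,e₂)`. -/
theorem courant_construct (P : CourantVectorBundle R E)
    (conn : Derivation ℚ R R → E → E)
    (hconn_addX : ∀ (X Y : Derivation ℚ R R) (e : E),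
      conn (X + Y) e = conn X e + conn Y e)
    (hconn_smulX : ∀ (f : R) (X : Derivation ℚ R R) (e : E),
      conn (f • X) e = f • conn X e)
    (hconn_adde : ∀ (X : Derivation ℚ R R) (e₁ e₂ : E),
      conn X (e₁ + e₂) = conn X e₁ + conn X e₂)
    (hconn_leibniz : ∀ (X : Derivation ℚ R R) (f : R) (e : E),
      conn X (f • e) = f • conn X e + (X f) • e)
    (hconn_metric : ∀ (X : Derivation ℚ R R) (e₁ e₂ : E),
      X (P.pair e₁ e₂) = P.pair (conn X e₁) e₂ + P.pair e₁ (conn X e₂))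
    (β : E →ₗ[R] E →ₗ[R] E)
    (hβ_skew : ∀ e₁ e₂ e₃ : E,
      P.pair (β e₁ e₂) e₃ = - P.pair (β e₂ e₁) e₃ ∧
      P.pair (β e₁ e₂) e₃ = - P.pair (β e₁ e₃) e₂)
    (hβ_anchor : ∀ e₁ e₂ : E,
      P.anchor (β e₁ e₂) = ⁅P.anchor e₁, P.anchor e₂⁆
        - P.anchor (conn (P.anchor e₁) e₂ - conn (P.anchor e₂) e₁))
    (ρstar : E → E → E)
    (hρstar : ∀ e₁ e₂ e : E,
      P.pair (ρstar e₁ e₂) e = P.pair (conn (P.anchor e) e₁) e₂)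
    (op : E → E → E)
    (hop : ∀ e₁ e₂ : E,
      op e₁ e₂ = conn (P.anchor e₁) e₂ - conn (P.anchor e₂) e₁
        + ρstar e₁ e₂ + β e₁ e₂) :
    (∀ e₁ e₂ : E, P.anchor (op e₁ e₂) = ⁅P.anchor e₁, P.anchor e₂⁆) ∧
    (∀ e₁ e₂ : E,
      P.pair (op e₁ e₁) e₂ = (2⁻¹ : ℚ) • (P.anchor e₂ (P.pair e₁ e₁))) ∧
    (∀ e₁ e₂ e₃ : E,
      P.anchor e₁ (P.pair e₂ e₃) = P.pair (op e₁ e₂) e₃ + P.pair e₂ (op e₁ e₃)) := by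

  have hconn0 : ∀ e : E, conn 0 e = 0 := by
    intro e
    have := hconn_addX 0 0 e
    simpa using this.symm
  have hρstar0 : ∀ e₁ e₂ : E, P.anchor (ρstar e₁ e₂) = 0 := by
    intro e₁ e₂
    apply P.coiso
    intro κ hκ
    rw [hρstar, hκ, hconn0]
    simp
  refine ⟨?_, ?_, ?_⟩
  · intro e₁ e₂
    rw [hop]
    simp only [map_add, map_sub, hρstar0, hβ_anchor]
    abel
  · intro e₁ e₂
    rw [hop]
    have hβ0 : P.pair (β e₁ e₁) e₂ = 0 := by
      have h := (hβ_skew e₁ e₁ e₂).1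
      have h2 : (2:ℚ) • P.pair (β e₁ e₁) e₂ = 0 := by rw [two_smul]; linear_combination h
      calc P.pair (β e₁ e₁) e₂ = (2⁻¹:ℚ) • ((2:ℚ) • P.pair (β e₁ e₁) e₂) := by
            rw [smul_smul]; norm_num
        _ = 0 := by rw [h2, smul_zero]
    have hm := hconn_metric (P.anchor e₂) e₁ e₁
    have hsym : P.pair e₁ (conn (P.anchor e₂) e₁) = P.pair (conn (P.anchor e₂) e₁) e₁ :=
      P.pair_symm _ _
    simp only [map_add, map_sub, LinearMap.add_apply, LinearMap.sub_apply, hβ0, hρstar]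
    rw [hm, hsym]
    have : P.pair (conn (P.anchor e₂) e₁) e₁ + P.pair (conn (P.anchor e₂) e₁) e₁
        = (2:ℚ) • P.pair (conn (P.anchor e₂) e₁) e₁ := by
      rw [two_smul]
    rw [this, smul_smul]
    norm_num
  · intro e₁ e₂ e₃
    rw [hop, hop]
    have hβ : P.pair (β e₁ e₂) e₃ = - P.pair (β e₁ e₃) e₂ := (hβ_skew e₁ e₂ e₃).2
    have hs : ∀ a b : E, P.pair a b = P.pair b a := P.pair_symm
    simp only [map_add, map_sub, LinearMap.add_apply, LinearMap.sub_apply, hρstar]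
    rw [hconn_metric (P.anchor e₁) e₂ e₃, hβ,
      hs e₂ (ρstar e₁ e₃), hρstar, hs e₂ ((β e₁) e₃), hs e₂ (conn (P.anchor e₃) e₁)]
    ring
end
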